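/- arXiv:2206.02642 — 2 statements merged into one kernel-verified Lean document; each statement's English description precedes it below -/
import Mathlib

section
/- Let N ≥ 2, K > 0, and γ ∈ (0, π/2). Let a : [0,∞) → ℝ^{N×N} be a family of symmetric matrices with nonnegative entries, and let c : [0,∞) → [0,∞) be locally integrable and such that for every t ≥ 0 and every w ∈ ℝ^N with ∑_i w_i = 0, ∑_{i,j=1}^N a_{ij}(t)·(w_i − w_j)² ≥ c(t)·∑_{i=1}^N w_i². Assume moreover that ∫_0^t c(s) ds → ∞ as t → ∞. Suppose θ : [0,∞) → ℝ^N is differentiable and satisfies the homogeneous Kuramoto system dθ_i/dt = (K/N)·∑_{j=1}^N a_{ij}(t)·sin(θ_j(t) − θ_i(t)), with ∑_{i=1}^N θ_i(0) = 0 and |θ_i(0) − θ_j(0)| ≤ γ for all i, j. Then θ(t) → 0 as t → ∞. -/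
open Real MeasureTheory Filter intervalIntegral

open Topology Set

/-!
The phase diameter `max_{i,j} (θ_i - θ_j)` cannot increase while it is at most `π`: at a pair
realising it, the leading oscillator only feels coupling terms `sin (θ_j - θ_i) ≤ 0` and the
trailing one only terms `≥ 0`. Hence the solution stays in `Δ(γ)`, where `x sin x ≥ (2/π) x²`.
Since the mean is conserved, the spectral gap then gives `(∑ θ_i²)' ≤ -(2K/(Nπ)) c(t) ∑ θ_i²`,
and a divergent cumulative gap forces the energy `∑ θ_i²`, hence `θ`, to `0`.
-/

theorem eventually_slope_sup'_lt {ι : Type*} [Fintype ι] [Nonempty ι] {f : ι → ℝ → ℝ}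
    {f' : ι → ℝ} {x r : ℝ} (hf : ∀ i, HasDerivWithinAt (f i) (f' i) (Ioi x) x)
    (hr : ∀ i, f i x = Finset.univ.sup' Finset.univ_nonempty (f · x) → f' i < r) :
    ∀ᶠ z in 𝓝[>] x, slope (fun y => Finset.univ.sup' Finset.univ_nonempty (f · y)) x z < r := by
  set g := fun y => Finset.univ.sup' Finset.univ_nonempty (f · y)
  have hbelow : ∀ i, ∀ᶠ z in 𝓝[>] x, f i z < g x + r * (z - x) := by
    intro i
    rcases (Finset.le_sup' (f · x) (Finset.mem_univ i)).eq_or_lt with hmax | hlt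
    · have hslope := ((hasDerivWithinAt_iff_tendsto_slope' (lt_irrefl x)).1 (hf i)).eventually
        (gt_mem_nhds (hr i hmax))
      filter_upwards [hslope, self_mem_nhdsWithin] with z hz hxz
      rw [slope_def_field, div_lt_iff₀ (sub_pos.2 hxz)] at hz
      linarith
    · have hlim : Tendsto (fun z => f i z - r * (z - x)) (𝓝[>] x) (𝓝 (f i x)) := by
        simpa using (hf i).continuousWithinAt.tendsto.sub
          (((tendsto_id.sub_const x).const_mul r).mono_left nhdsWithin_le_nhds)
      filter_upwards [hlim.eventually (gt_mem_nhds hlt)] with z hz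
      linarith
  filter_upwards [Filter.eventually_all.2 hbelow, self_mem_nhdsWithin] with z hz hxz
  rw [slope_def_field, div_lt_iff₀ (sub_pos.2 hxz)]
  have hgz : g z < g x + r * (z - x) := (Finset.sup'_lt_iff _).2 fun i _ => hz i
  linarith

theorem tendsto_zero_of_hasDerivAt_le_neg_mul {V V' c : ℝ → ℝ}
    (hV : ∀ t, 0 ≤ t → HasDerivAt V (V' t) t) (hV' : ∀ t, 0 ≤ t → V' t ≤ -(c t * V t))
    (hVnn : ∀ t, 0 ≤ t → 0 ≤ V t) (hc0 : ∀ t, 0 ≤ t → 0 ≤ c t)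
    (hcInt : ∀ t, 0 ≤ t → IntervalIntegrable c volume 0 t)
    (hdiv : Tendsto (fun t => ∫ s in (0:ℝ)..t, c s) atTop atTop) :
    Tendsto V atTop (𝓝 0) := by
  have hcont : ContinuousOn V (Ici 0) := fun t ht => (hV t ht).continuousAt.continuousWithinAt
  have hanti : AntitoneOn V (Ici 0) := by
    refine antitoneOn_of_hasDerivWithinAt_nonpos (convex_Ici 0) hcont
      (fun t ht => (hV t (interior_subset ht)).hasDerivWithinAt) fun t ht => ?_
    have ht : 0 ≤ t := interior_subset ht
    nlinarith [hV' t ht, mul_nonneg (hc0 t ht) (hVnn t ht)]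
  -- `∫₀ᵗ c V ≤ V 0 - V t`, and `V t ≤ V s` on `[0, t]`.
  have hbound : ∀ t, 0 ≤ t → V t * ∫ s in (0:ℝ)..t, c s ≤ V 0 := by
    intro t ht
    have hVt : ContinuousOn V (Icc 0 t) := hcont.mono Icc_subset_Ici_self
    have hcV : IntervalIntegrable (fun s => c s * V s) volume 0 t :=
      (hcInt t ht).mul_continuousOn (by rwa [uIcc_of_le ht])
    calc V t * ∫ s in (0:ℝ)..t, c s = ∫ s in (0:ℝ)..t, c s * V t := by
          rw [intervalIntegral.integral_mul_const, mul_comm]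
      _ ≤ ∫ s in (0:ℝ)..t, c s * V s :=
          intervalIntegral.integral_mono_on ht ((hcInt t ht).mul_const _) hcV fun s hs =>
            mul_le_mul_of_nonneg_left (hanti hs.1 ht hs.2) (hc0 s hs.1)
      _ ≤ -V t - -V 0 :=
          integral_le_sub_of_hasDeriv_right_of_le ht hVt.neg
            (fun s hs => (hV s hs.1.le).neg.hasDerivWithinAt)
            ((intervalIntegrable_iff_integrableOn_Icc_of_le ht).1 hcV)
            fun s hs => by linarith [hV' s hs.1.le]
      _ ≤ V 0 := by linarith [hVnn t ht]
  refine squeeze_zero' (eventually_ge_atTop 0 |>.mono hVnn) ?_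
    (tendsto_const_nhds.div_atTop hdiv : Tendsto (fun t => V 0 / ∫ s in (0:ℝ)..t, c s) _ _)
  filter_upwards [eventually_ge_atTop 0, hdiv.eventually_gt_atTop 0] with t ht hpos
  rw [le_div_iff₀ hpos]
  exact hbound t ht

theorem tendsto_nhds_zero_of_tendsto_sum_sq {α ι : Type*} [Fintype ι] {l : Filter α}
    {f : α → ι → ℝ} (h : Tendsto (fun a => ∑ i, f a i ^ 2) l (𝓝 0)) : Tendsto f l (𝓝 0) := by
  refine tendsto_pi_nhds.2 fun i => squeeze_zero_norm (fun a => ?_) (by simpa using h.sqrt)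
  rw [Real.norm_eq_abs, ← Real.sqrt_sq_eq_abs]
  exact Real.sqrt_le_sqrt (Finset.single_le_sum (fun j _ => sq_nonneg (f a j)) (Finset.mem_univ i))

theorem two_div_pi_mul_sq_le_mul_sin {x : ℝ} (hx : |x| ≤ π / 2) : 2 / π * x ^ 2 ≤ x * sin x := by
  have heven : |x| * sin |x| = x * sin x := by
    rcases abs_choice x with h | h <;> rw [h]
    rw [sin_neg, neg_mul_neg]
  rw [← heven, ← sq_abs]
  nlinarith [mul_le_mul_of_nonneg_left (mul_le_sin (abs_nonneg x) hx) (abs_nonneg x)]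

namespace Kuramoto

variable {ι : Type*}

def cohesiveSet (γ : ℝ) : Set (ι → ℝ) := {θ | ∀ i j, |θ i - θ j| ≤ γ}

variable [Fintype ι]

noncomputable def field (k : ℝ) (A : ι → ι → ℝ) (θ : ι → ℝ) (i : ι) : ℝ :=
  k * ∑ j, A i j * sin (θ j - θ i)

def IsSolution (k : ℝ) (A : ℝ → ι → ι → ℝ) (θ : ℝ → ι → ℝ) : Prop :=
  ∀ t, 0 ≤ t → ∀ i, HasDerivAt (fun s => θ s i) (field k (A t) (θ t) i) t

theorem sum_sum_mul_swap_of_symm {A : ι → ι → ℝ} (hA : ∀ i j, A i j = A j i)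
    (f : ι → ι → ℝ) : ∑ i, ∑ j, A i j * f i j = ∑ i, ∑ j, A i j * f j i := by
  rw [Finset.sum_comm]
  exact Finset.sum_congr rfl fun i _ => Finset.sum_congr rfl fun j _ => by rw [hA]

theorem sum_field_eq_zero {A : ι → ι → ℝ} (hA : ∀ i j, A i j = A j i) (k : ℝ) (θ : ι → ℝ) :
    ∑ i, field k A θ i = 0 := by
  have hswap := sum_sum_mul_swap_of_symm hA fun i j => sin (θ j - θ i)
  have hanti : ∑ i, ∑ j, A i j * sin (θ j - θ i) = -∑ i, ∑ j, A i j * sin (θ j - θ i) := by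
    conv_rhs => rw [hswap]
    simp only [← Finset.sum_neg_distrib, ← mul_neg, ← sin_neg, neg_sub]
  simp only [field, ← Finset.mul_sum]
  rw [self_eq_neg.1 hanti, mul_zero]

theorem sum_mul_field {A : ι → ι → ℝ} (hA : ∀ i j, A i j = A j i) (k : ℝ) (θ : ι → ℝ) :
    ∑ i, θ i * field k A θ i
      = -(k / 2) * ∑ i, ∑ j, A i j * ((θ i - θ j) * sin (θ i - θ j)) := by
  have hswap := sum_sum_mul_swap_of_symm hA fun i j => θ i * sin (θ j - θ i)
  have hpair : ∀ i j, A i j * (θ i * sin (θ j - θ i)) + A i j * (θ j * sin (θ i - θ j))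
      = -(A i j * ((θ i - θ j) * sin (θ i - θ j))) := fun i j => by
    rw [← neg_sub (θ i), sin_neg]; ring
  have htwice : 2 * ∑ i, ∑ j, A i j * (θ i * sin (θ j - θ i))
      = -∑ i, ∑ j, A i j * ((θ i - θ j) * sin (θ i - θ j)) := by
    rw [two_mul]
    nth_rewrite 2 [hswap]
    simp only [← Finset.sum_add_distrib, hpair, Finset.sum_neg_distrib]
  have hexpand : ∑ i, θ i * field k A θ i = k * ∑ i, ∑ j, A i j * (θ i * sin (θ j - θ i)) := by
    simp only [field, Finset.mul_sum]
    exact Finset.sum_congr rfl fun i _ => Finset.sum_congr rfl fun j _ => by ring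
  linear_combination hexpand + k / 2 * htwice

def HasSpectralGap (A : ι → ι → ℝ) (c : ℝ) : Prop :=
  ∀ w : ι → ℝ, ∑ i, w i = 0 → c * ∑ i, w i ^ 2 ≤ ∑ i, ∑ j, A i j * (w i - w j) ^ 2

theorem sum_mul_field_le {k : ℝ} (hk : 0 ≤ k) {A : ι → ι → ℝ} (hAsymm : ∀ i j, A i j = A j i)
    (hA : ∀ i j, 0 ≤ A i j) {c : ℝ} (hgap : HasSpectralGap A c) {θ : ι → ℝ}
    (hθ : θ ∈ cohesiveSet (π / 2)) (hmean : ∑ i, θ i = 0) :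
    ∑ i, θ i * field k A θ i ≤ -(k / π * c) * ∑ i, θ i ^ 2 := by
  have hjordan : 2 / π * ∑ i, ∑ j, A i j * (θ i - θ j) ^ 2
      ≤ ∑ i, ∑ j, A i j * ((θ i - θ j) * sin (θ i - θ j)) := by
    simp only [Finset.mul_sum]
    refine Finset.sum_le_sum fun i _ => Finset.sum_le_sum fun j _ => ?_
    rw [mul_left_comm]
    exact mul_le_mul_of_nonneg_left (two_div_pi_mul_sq_le_mul_sin (hθ i j)) (hA i j)
  rw [sum_mul_field hAsymm]
  have hπ := pi_pos
  calc -(k / 2) * ∑ i, ∑ j, A i j * ((θ i - θ j) * sin (θ i - θ j))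
      ≤ -(k / 2) * (2 / π * ∑ i, ∑ j, A i j * (θ i - θ j) ^ 2) :=
        mul_le_mul_of_nonpos_left hjordan (by linarith)
    _ = -(k / π) * ∑ i, ∑ j, A i j * (θ i - θ j) ^ 2 := by field_simp
    _ ≤ -(k / π) * (c * ∑ i, θ i ^ 2) :=
        mul_le_mul_of_nonpos_left (hgap θ hmean) (by have := div_nonneg hk hπ.le; linarith)
    _ = -(k / π * c) * ∑ i, θ i ^ 2 := by ring

section Diameter

variable [Nonempty ι]

noncomputable def diameter (θ : ι → ℝ) : ℝ :=
  Finset.univ.sup' Finset.univ_nonempty fun p : ι × ι => θ p.1 - θ p.2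

theorem sub_le_diameter (θ : ι → ℝ) (i j : ι) : θ i - θ j ≤ diameter θ :=
  Finset.le_sup' (fun p : ι × ι => θ p.1 - θ p.2) (Finset.mem_univ (i, j))

theorem exists_sub_eq_diameter (θ : ι → ℝ) : ∃ i j, θ i - θ j = diameter θ := by
  obtain ⟨p, -, hp⟩ := Finset.exists_mem_eq_sup' Finset.univ_nonempty
    fun p : ι × ι => θ p.1 - θ p.2
  exact ⟨p.1, p.2, hp.symm⟩

theorem mem_cohesiveSet_iff_diameter_le {γ : ℝ} {θ : ι → ℝ} :
    θ ∈ cohesiveSet γ ↔ diameter θ ≤ γ := by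
  simp only [cohesiveSet, mem_ofPred_eq, abs_sub_le_iff, diameter, Finset.sup'_le_iff,
    Finset.mem_univ, true_implies, Prod.forall]
  exact ⟨fun h i j => (h i j).1, fun h i j => ⟨h i j, h j i⟩⟩

theorem field_sub_field_nonpos {k : ℝ} (hk : 0 ≤ k) {A : ι → ι → ℝ} (hA : ∀ i j, 0 ≤ A i j)
    {θ : ι → ℝ} {i i' : ι} (hii' : θ i - θ i' = diameter θ) (hdiam : diameter θ ≤ π) :
    field k A θ i - field k A θ i' ≤ 0 := by
  have hmax : ∀ j, θ j - θ i ∈ Icc (-π) 0 := fun j =>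
    ⟨by linarith [sub_le_diameter θ i j], by linarith [sub_le_diameter θ j i']⟩
  have hmin : ∀ j, θ j - θ i' ∈ Icc 0 π := fun j =>
    ⟨by linarith [sub_le_diameter θ i j], by linarith [sub_le_diameter θ j i']⟩
  have hfi : field k A θ i ≤ 0 :=
    mul_nonpos_of_nonneg_of_nonpos hk <| Finset.sum_nonpos fun j _ =>
      mul_nonpos_of_nonneg_of_nonpos (hA i j)
        (sin_nonpos_of_nonpos_of_neg_pi_le (hmax j).2 (hmax j).1)
  have hfi' : 0 ≤ field k A θ i' :=
    mul_nonneg hk <| Finset.sum_nonneg fun j _ =>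
      mul_nonneg (hA i' j) (sin_nonneg_of_nonneg_of_le_pi (hmin j).1 (hmin j).2)
  linarith

end Diameter

namespace IsSolution

variable {k : ℝ} {A : ℝ → ι → ι → ℝ} {θ : ℝ → ι → ℝ}

theorem diameter_le_add_mul [Nonempty ι] (hθ : IsSolution k A θ) (hk : 0 ≤ k)
    (hA : ∀ t, 0 ≤ t → ∀ i j, 0 ≤ A t i j) {γ ε T : ℝ} (hT : 0 ≤ T) (hε : 0 < ε)
    (hγT : γ + ε * T ≤ π) (h0 : diameter (θ 0) ≤ γ) :
    diameter (θ T) ≤ γ + ε * T := by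
  have hdiff : ∀ t, 0 ≤ t → ∀ p : ι × ι, HasDerivAt (fun s => θ s p.1 - θ s p.2)
      (field k (A t) (θ t) p.1 - field k (A t) (θ t) p.2) t :=
    fun t ht p => (hθ t ht p.1).sub (hθ t ht p.2)
  have hactive : ∀ t, (Finset.univ.filter fun p : ι × ι =>
      θ t p.1 - θ t p.2 = diameter (θ t)).Nonempty := fun t => by
    obtain ⟨i, j, hij⟩ := exists_sub_eq_diameter (θ t)
    exact ⟨(i, j), Finset.mem_filter.2 ⟨Finset.mem_univ _, hij⟩⟩
  -- Only pairs realising the diameter matter for its right Dini derivative, which `D` bounds.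
  -- The slack `ε` makes the contact inequality strict, as the comparison lemma requires.
  set D : ℝ → ℝ := fun t => (Finset.univ.filter fun p : ι × ι =>
      θ t p.1 - θ t p.2 = diameter (θ t)).sup' (hactive t)
    fun p => field k (A t) (θ t) p.1 - field k (A t) (θ t) p.2
  refine image_le_of_liminf_slope_right_lt_deriv_boundary' (f := fun t => diameter (θ t))
    (f' := D) (B' := fun _ => ε) (fun t ht => ?_) (fun t ht r hr => ?_) (by simpa using h0)
    (by fun_prop) (fun t _ => ((hasDerivAt_id t).const_mul ε).const_add γ |>.hasDerivWithinAt
      |>.congr_deriv (mul_one ε)) (fun t ht hcontact => ?_) ⟨hT, le_rfl⟩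
  · exact (ContinuousAt.finset_sup'_apply Finset.univ_nonempty fun p _ =>
      (hdiff t ht.1 p).continuousAt).continuousWithinAt
  · refine (eventually_slope_sup'_lt (fun p => (hdiff t ht.1 p).hasDerivWithinAt)
      fun p hp => ?_).frequently
    exact (Finset.le_sup' _ (Finset.mem_filter.2 ⟨Finset.mem_univ p, hp⟩)).trans_lt hr
  · refine (Finset.sup'_lt_iff _).2 fun p hp => ?_
    have hdiam : diameter (θ t) ≤ π := by
      rw [hcontact, id]; nlinarith [ht.2]
    exact (field_sub_field_nonpos hk (hA t ht.1) (Finset.mem_filter.1 hp).2 hdiam).trans_lt hε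

theorem mem_cohesiveSet (hθ : IsSolution k A θ) (hk : 0 ≤ k)
    (hA : ∀ t, 0 ≤ t → ∀ i j, 0 ≤ A t i j) {γ : ℝ} (hγ : γ < π) (h0 : θ 0 ∈ cohesiveSet γ)
    {t : ℝ} (ht : 0 ≤ t) : θ t ∈ cohesiveSet γ := by
  rcases isEmpty_or_nonempty ι with hι | hι
  · exact fun i => isEmptyElim i
  rw [mem_cohesiveSet_iff_diameter_le] at h0 ⊢
  have hlim : Tendsto (fun ε => γ + ε * t) (𝓝[>] 0) (𝓝 γ) := by
    have hcont : Tendsto (fun ε : ℝ => γ + ε * t) (𝓝 0) (𝓝 (γ + 0 * t)) :=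
      (tendsto_id.mul_const t).const_add γ
    simpa using hcont.mono_left nhdsWithin_le_nhds
  have hsmall : ∀ᶠ ε in 𝓝[>] 0, diameter (θ t) ≤ γ + ε * t := by
    filter_upwards [self_mem_nhdsWithin, hlim.eventually (ge_mem_nhds hγ)] with ε hε hεπ
    exact hθ.diameter_le_add_mul hk hA ht hε hεπ h0
  exact ge_of_tendsto hlim hsmall

theorem sum_eq_sum_initial (hθ : IsSolution k A θ) (hA : ∀ t, 0 ≤ t → ∀ i j, A t i j = A t j i)
    {t : ℝ} (ht : 0 ≤ t) : ∑ i, θ t i = ∑ i, θ 0 i := by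
  have hderiv : ∀ s, 0 ≤ s → HasDerivAt (fun s => ∑ i, θ s i) 0 s := fun s hs => by
    simpa only [sum_field_eq_zero (hA s hs)] using
      HasDerivAt.fun_sum (u := Finset.univ) fun i _ => hθ s hs i
  exact constant_of_has_deriv_right_zero
    (fun s hs => (hderiv s hs.1).continuousAt.continuousWithinAt)
    (fun s hs => (hderiv s hs.1).hasDerivWithinAt) t ⟨ht, le_rfl⟩

theorem hasDerivAt_sum_sq (hθ : IsSolution k A θ) {t : ℝ} (ht : 0 ≤ t) :
    HasDerivAt (fun s => ∑ i, θ s i ^ 2) (2 * ∑ i, θ t i * field k (A t) (θ t) i) t := by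
  refine (HasDerivAt.fun_sum (u := Finset.univ) fun i _ => (hθ t ht i).fun_pow 2).congr_deriv ?_
  rw [Finset.mul_sum]
  exact Finset.sum_congr rfl fun i _ => by push_cast; ring

end IsSolution

end Kuramoto

theorem kuramoto_synchronization_from_cohesive_general
    (N : ℕ) (hN : 2 ≤ N) (K : ℝ) (hK : 0 < K)
    (γ : ℝ) (hγ : γ < Real.pi / 2)
    (a : ℝ → Fin N → Fin N → ℝ)
    (hsym : ∀ t : ℝ, 0 ≤ t → ∀ i j : Fin N, a t i j = a t j i)
    (ha : ∀ t : ℝ, 0 ≤ t → ∀ i j : Fin N, 0 ≤ a t i j)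
    (c : ℝ → ℝ)
    (hc0 : ∀ t : ℝ, 0 ≤ t → 0 ≤ c t)
    (hcInt : ∀ t : ℝ, 0 ≤ t → IntervalIntegrable c volume 0 t)
    (hgap : ∀ t : ℝ, 0 ≤ t → ∀ w : Fin N → ℝ, (∑ i : Fin N, w i) = 0 →
      c t * ∑ i : Fin N, (w i) ^ 2
        ≤ ∑ i : Fin N, ∑ j : Fin N, a t i j * (w i - w j) ^ 2)
    (hdiv : Tendsto (fun t : ℝ => ∫ s in (0:ℝ)..t, c s) atTop atTop)
    (θ : ℝ → Fin N → ℝ)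
    (hode : ∀ t : ℝ, 0 ≤ t → ∀ i : Fin N,
      HasDerivAt (fun s => θ s i)
        ((K / N) * ∑ j : Fin N, a t i j * Real.sin (θ t j - θ t i)) t)
    (hmean0 : ∑ i : Fin N, θ 0 i = 0)
    (hinit : ∀ i j : Fin N, |θ 0 i - θ 0 j| ≤ γ) :
    Tendsto θ atTop (nhds 0) := by
  have hsol : Kuramoto.IsSolution (K / N) a θ := hode
  have hk : 0 < K / N := div_pos hK (by exact_mod_cast zero_lt_two.trans_le hN)
  have hκ : 0 < 2 * (K / N) / π := by positivity
  have hcoh : ∀ t, 0 ≤ t → θ t ∈ Kuramoto.cohesiveSet (π / 2) := fun t ht i j =>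
    (hsol.mem_cohesiveSet hk.le ha (by linarith [pi_pos]) hinit ht i j).trans hγ.le
  refine tendsto_nhds_zero_of_tendsto_sum_sq <| tendsto_zero_of_hasDerivAt_le_neg_mul
    (c := fun t => 2 * (K / N) / π * c t) (fun t ht => hsol.hasDerivAt_sum_sq ht)
    (fun t ht => ?_) (fun t _ => by positivity) (fun t ht => mul_nonneg hκ.le (hc0 t ht))
    (fun t ht => (hcInt t ht).const_mul _) ?_
  · have hdecay := Kuramoto.sum_mul_field_le hk.le (hsym t ht) (ha t ht) (hgap t ht) (hcoh t ht)
      ((hsol.sum_eq_sum_initial hsym ht).trans hmean0)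
    linear_combination 2 * hdecay
  · simpa only [intervalIntegral.integral_const_mul] using hdiv.const_mul_atTop hκ

/-- Synchronization from the phase-cohesive set: if the cumulative spectral
gap of the time-varying network diverges, the homogeneous Kuramoto system
started in Δ(γ), γ < π/2, with mean zero converges to the all-in-phase
state 0. -/
theorem kuramoto_synchronization_from_cohesive
    (N : ℕ) (hN : 2 ≤ N) (K : ℝ) (hK : 0 < K)
    (γ : ℝ) (hγ0 : 0 < γ) (hγ : γ < Real.pi / 2)
    (a : ℝ → Fin N → Fin N → ℝ)
    (hsym : ∀ t : ℝ, 0 ≤ t → ∀ i j : Fin N, a t i j = a t j i)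
    (ha : ∀ t : ℝ, 0 ≤ t → ∀ i j : Fin N, 0 ≤ a t i j)
    (c : ℝ → ℝ)
    (hc0 : ∀ t : ℝ, 0 ≤ t → 0 ≤ c t)
    (hcInt : ∀ t : ℝ, 0 ≤ t → IntervalIntegrable c volume 0 t)
    (hgap : ∀ t : ℝ, 0 ≤ t → ∀ w : Fin N → ℝ, (∑ i : Fin N, w i) = 0 →
      c t * ∑ i : Fin N, (w i) ^ 2
        ≤ ∑ i : Fin N, ∑ j : Fin N, a t i j * (w i - w j) ^ 2)
    (hdiv : Tendsto (fun t : ℝ => ∫ s in (0:ℝ)..t, c s) atTop atTop)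
    (θ : ℝ → Fin N → ℝ)
    (hode : ∀ t : ℝ, 0 ≤ t → ∀ i : Fin N,
      HasDerivAt (fun s => θ s i)
        ((K / N) * ∑ j : Fin N, a t i j * Real.sin (θ t j - θ t i)) t)
    (hmean0 : ∑ i : Fin N, θ 0 i = 0)
    (hinit : ∀ i j : Fin N, |θ 0 i - θ 0 j| ≤ γ) :
    Tendsto θ atTop (nhds 0) :=
  kuramoto_synchronization_from_cohesive_general N hN K hK γ hγ a hsym ha c hc0 hcInt hgap hdiv θ
    hode hmean0 hinit
end

section
/- Let N ≥ 2, K > 0, ā > 0, and γ ∈ (0, π/2). Suppose θ : [0,∞) → ℝ^N is differentiable and satisfies the averaged (all-to-all) homogeneous Kuramoto system dθ_i/dt = (K/N)·∑_{j=1}^N ā·sin(θ_j(t) − θ_i(t)) for all t ≥ 0, with ∑_{i=1}^N θ_i(0) = 0 and |θ_i(0) − θ_j(0)| ≤ γ for all i, j. Then for all t ≥ 0: ∑_{i=1}^N θ_i(t)² ≤ (∑_{i=1}^N θ_i(0)²)·exp(−2·K·ā·cos γ·t); in particular θ(t) → 0 as t → ∞. -/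
/-!
The squared norm `V = ∑ θᵢ²` is a Lyapunov function. Antisymmetry of the coupling gives
`V' = -(K ā / N) ∑ᵢⱼ (θᵢ - θⱼ) sin (θᵢ - θⱼ)`, and while all phase differences lie in `[-γ, γ]`
one has `x sin x ≥ cos γ · x²` there; as the mean `∑ θᵢ` is conserved, `∑ᵢⱼ (θᵢ - θⱼ)² = 2 N V`,
whence `V' ≤ -2 K ā cos γ · V` and Grönwall's inequality. The phase differences do stay in
`[-γ, γ]`: as long as they all lie in `[-π/2, π/2]`, monotonicity of `sin` there makes every
`(θᵢ - θⱼ)²` non-increasing, and a first-exit argument shows they never leave.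
-/

open Real Filter Set Topology

theorem le_of_antitoneOn_while_le {ι : Type*} [Finite ι] {u : ι → ℝ → ℝ} {a b : ℝ}
    (hab : a < b) (hu : ∀ k, ContinuousOn (u k) (Ici 0)) (h0 : ∀ k, u k 0 ≤ a)
    (hanti : ∀ T, (∀ t ∈ Icc 0 T, ∀ k, u k t ≤ b) → ∀ k, AntitoneOn (u k) (Icc 0 T))
    {t : ℝ} (ht : 0 ≤ t) (k : ι) : u k t ≤ a := by
  suffices hb : ∀ t, 0 ≤ t → ∀ k, u k t < b from
    (hanti t (fun s hs k => (hb s hs.1 k).le) k ⟨le_rfl, ht⟩ ⟨ht, le_rfl⟩ ht).trans (h0 k)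
  by_contra! ⟨t₁, ht₁, k₁, hk₁⟩
  set S := ⋃ k, Icc 0 t₁ ∩ u k ⁻¹' Ici b
  have hS : IsClosed S := isClosed_iUnion_of_finite fun k =>
    ((hu k).mono Icc_subset_Ici_self).preimage_isClosed_of_isClosed isClosed_Icc isClosed_Ici
  have hbdd : BddBelow S := ⟨0, fun s hs => (mem_iUnion.1 hs).choose_spec.1.1⟩
  have ht₁S : t₁ ∈ S := mem_iUnion.2 ⟨k₁, ⟨ht₁, le_rfl⟩, hk₁⟩
  obtain ⟨k, ⟨hT0, -⟩, hTk⟩ := mem_iUnion.1 (hS.csInf_mem ⟨t₁, ht₁S⟩ hbdd)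
  set T := sInf S
  -- `T` is the first time some `u k` reaches `b`; before `T` all of them stay below `a`.
  have hbefore : ∀ s ∈ Ico 0 T, u k s ≤ a := by
    intro s hs
    refine (hanti s (fun r hr j => ?_) k ⟨le_rfl, hs.1⟩ ⟨hs.1, le_rfl⟩ hs.1).trans (h0 k)
    by_contra! hr'
    have hrt₁ : r ≤ t₁ := hr.2.trans (hs.2.le.trans (csInf_le hbdd ht₁S))
    exact (csInf_le hbdd (mem_iUnion.2 ⟨j, ⟨hr.1, hrt₁⟩, hr'.le⟩)).not_gt (hr.2.trans_lt hs.2)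
  have hTk' : b ≤ u k T := hTk
  rcases hT0.eq_or_lt with hT | hT
  · rw [← hT] at hTk'
    linarith [h0 k]
  · have hcl : closure (Ico 0 T) = Icc 0 T := closure_Ico hT.ne
    have : u k T ≤ a := le_on_closure hbefore ((hu k).mono (hcl ▸ Icc_subset_Ici_self))
      continuousOn_const (hcl ▸ ⟨hT0, le_rfl⟩)
    linarith

theorem le_mul_exp_of_hasDerivAt_le_mul {f f' : ℝ → ℝ} {c : ℝ}
    (hf : ∀ t, 0 ≤ t → HasDerivAt f (f' t) t) (hbound : ∀ t, 0 ≤ t → f' t ≤ c * f t)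
    {t : ℝ} (ht : 0 ≤ t) : f t ≤ f 0 * exp (c * t) := by
  have := le_gronwallBound_of_liminf_deriv_right_le (f' := f') (ε := 0)
    (fun s hs => (hf s hs.1).continuousAt.continuousWithinAt)
    (fun s hs r hr => by
      simpa [slope_def_field, div_eq_inv_mul] using
        (hf s hs.1).hasDerivWithinAt.liminf_right_slope_le hr)
    le_rfl (fun s hs => by simpa using hbound s hs.1) t ⟨ht, le_rfl⟩
  simpa [gronwallBound_ε0] using this

theorem tendsto_nhds_zero_of_sum_sq_le {α ι : Type*} [Fintype ι] {l : Filter α} {f : α → ι → ℝ}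
    {g : α → ℝ} (hfg : ∀ᶠ a in l, ∑ i, f a i ^ 2 ≤ g a) (hg : Tendsto g l (𝓝 0)) :
    Tendsto f l (𝓝 0) :=
  tendsto_pi_nhds.2 fun i => squeeze_zero_norm'
    (hfg.mono fun a ha => Real.abs_le_sqrt <|
      (Finset.single_le_sum (fun j _ => sq_nonneg (f a j)) (Finset.mem_univ i)).trans ha)
    (by simpa using hg.sqrt)

theorem Finset.sum_sum_sub_sq {ι R : Type*} [CommRing R] (s : Finset ι) (x : ι → R) :
    ∑ i ∈ s, ∑ j ∈ s, (x i - x j) ^ 2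
      = 2 * s.card * ∑ i ∈ s, x i ^ 2 - 2 * (∑ i ∈ s, x i) ^ 2 := by
  simp only [sub_sq, sum_add_distrib, sum_sub_distrib, sum_const, nsmul_eq_mul, ← mul_sum,
    ← sum_mul]
  ring

theorem Real.cos_mul_sq_le_mul_sin {γ x : ℝ} (hγ : γ < π / 2) (hx : |x| ≤ γ) :
    cos γ * x ^ 2 ≤ x * sin x := by
  suffices h : cos γ * |x| ^ 2 ≤ |x| * sin |x| by
    rcases abs_cases x with ⟨hx', -⟩ | ⟨hx', -⟩ <;> simpa [hx'] using h
  have hx2 : |x| < π / 2 := hx.trans_lt hγ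
  have hcos : cos γ ≤ cos |x| :=
    cos_le_cos_of_nonneg_of_le_pi (abs_nonneg x) (by linarith [pi_pos]) hx
  have htan : |x| * cos |x| ≤ sin |x| := by
    have := le_tan (abs_nonneg x) hx2
    have hcos_pos : 0 < cos |x| := cos_pos_of_mem_Ioo ⟨by linarith [abs_nonneg x], hx2⟩
    rwa [tan_eq_sin_div_cos, le_div_iff₀ hcos_pos] at this
  nlinarith [abs_nonneg x, sq_nonneg x]

theorem Real.sub_mul_sin_sub_sin_nonneg {y z : ℝ} (hy : |y| ≤ π / 2) (hz : |z| ≤ π / 2) :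
    0 ≤ (y - z) * (sin y - sin z) := by
  rw [abs_le] at hy hz
  rcases le_total y z with h | h
  · exact mul_nonneg_of_nonpos_of_nonpos (by linarith)
      (sub_nonpos.2 (sin_le_sin_of_le_of_le_pi_div_two hy.1 hz.2 h))
  · exact mul_nonneg (by linarith) (sub_nonneg.2 (sin_le_sin_of_le_of_le_pi_div_two hz.1 hy.2 h))

variable {ι : Type*} [Fintype ι]

-- The coupling constant `κ` stands for `K ā / N`.
noncomputable def kuramotoField (κ : ℝ) (x : ι → ℝ) (i : ι) : ℝ := κ * ∑ j, sin (x j - x i)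

theorem sum_kuramotoField (κ : ℝ) (x : ι → ℝ) : ∑ i, kuramotoField κ x i = 0 := by
  have h : ∑ i, ∑ j, sin (x j - x i) = ∑ i, ∑ j, -sin (x j - x i) := by
    rw [Finset.sum_comm]
    simp only [← sin_neg, neg_sub]
  simp only [Finset.sum_neg_distrib] at h
  simp only [kuramotoField, ← Finset.mul_sum, show ∑ i, ∑ j, sin (x j - x i) = 0 by linarith,
    mul_zero]

theorem two_mul_sum_mul_kuramotoField (κ : ℝ) (x : ι → ℝ) :
    2 * ∑ i, x i * kuramotoField κ x i = -κ * ∑ i, ∑ j, (x i - x j) * sin (x i - x j) := by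
  have hF : ∑ i, x i * kuramotoField κ x i = κ * ∑ i, ∑ j, x i * sin (x j - x i) := by
    simp only [kuramotoField, Finset.mul_sum]
    exact Finset.sum_congr rfl fun i _ => Finset.sum_congr rfl fun j _ => by ring
  have hswap : ∑ i, ∑ j, x i * sin (x j - x i) = ∑ i, ∑ j, x j * sin (x i - x j) :=
    Finset.sum_comm
  calc 2 * ∑ i, x i * kuramotoField κ x i
      = κ * (∑ i, ∑ j, x i * sin (x j - x i) + ∑ i, ∑ j, x j * sin (x i - x j)) := by
        rw [hF, ← hswap]
        ring
    _ = -κ * ∑ i, ∑ j, (x i - x j) * sin (x i - x j) := by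
        simp only [← Finset.sum_add_distrib, Finset.mul_sum]
        refine Finset.sum_congr rfl fun i _ => Finset.sum_congr rfl fun j _ => ?_
        rw [← neg_sub (x i), sin_neg]
        ring

theorem sub_mul_kuramotoField_sub_nonpos {κ : ℝ} (hκ : 0 ≤ κ) {x : ι → ℝ}
    (hx : ∀ i j, |x i - x j| ≤ π / 2) (i j : ι) :
    (x i - x j) * (kuramotoField κ x i - kuramotoField κ x j) ≤ 0 := by
  have h : (x i - x j) * (kuramotoField κ x i - kuramotoField κ x j)
      = -κ * ∑ k, ((x k - x j) - (x k - x i)) * (sin (x k - x j) - sin (x k - x i)) := by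
    simp only [kuramotoField, Finset.mul_sum, ← Finset.sum_sub_distrib]
    refine Finset.sum_congr rfl fun k _ => ?_
    ring
  rw [h, neg_mul]
  exact neg_nonpos.2 (mul_nonneg hκ (Finset.sum_nonneg fun k _ =>
    sub_mul_sin_sub_sin_nonneg (hx k j) (hx k i)))

theorem two_mul_sum_mul_kuramotoField_le {κ γ : ℝ} (hκ : 0 ≤ κ) (hγ : γ < π / 2) {x : ι → ℝ}
    (hmean : ∑ i, x i = 0) (hx : ∀ i j, |x i - x j| ≤ γ) :
    2 * ∑ i, x i * kuramotoField κ x i ≤ -(2 * κ * Fintype.card ι * cos γ) * ∑ i, x i ^ 2 := by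
  have hsq := Finset.sum_sum_sub_sq Finset.univ x
  rw [hmean, Finset.card_univ] at hsq
  have hsin : cos γ * ∑ i, ∑ j, (x i - x j) ^ 2 ≤ ∑ i, ∑ j, (x i - x j) * sin (x i - x j) := by
    simp only [Finset.mul_sum]
    exact Finset.sum_le_sum fun i _ =>
      Finset.sum_le_sum fun j _ => cos_mul_sq_le_mul_sin hγ (hx i j)
  rw [two_mul_sum_mul_kuramotoField, hsq] at *
  nlinarith [mul_le_mul_of_nonneg_left hsin hκ]

def IsKuramotoTrajectory (κ : ℝ) (x : ℝ → ι → ℝ) : Prop :=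
  ∀ t, 0 ≤ t → ∀ i, HasDerivAt (fun s => x s i) (kuramotoField κ (x t) i) t

namespace IsKuramotoTrajectory

variable {κ γ : ℝ} {x : ℝ → ι → ℝ}

theorem sum_eq (hx : IsKuramotoTrajectory κ x) {t : ℝ} (ht : 0 ≤ t) :
    ∑ i, x t i = ∑ i, x 0 i := by
  have hderiv : ∀ s, 0 ≤ s → HasDerivAt (fun s => ∑ i, x s i) 0 s := fun s hs => by
    have := HasDerivAt.fun_sum (u := Finset.univ) fun i _ => hx s hs i
    rwa [sum_kuramotoField] at this
  exact constant_of_has_deriv_right_zero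
    (fun s hs => (hderiv s hs.1).continuousAt.continuousWithinAt)
    (fun s hs => (hderiv s hs.1).hasDerivWithinAt) t ⟨ht, le_rfl⟩

theorem hasDerivAt_sub_sq (hx : IsKuramotoTrajectory κ x) {s : ℝ} (hs : 0 ≤ s) (i j : ι) :
    HasDerivAt (fun s => (x s i - x s j) ^ 2)
      (2 * ((x s i - x s j) * (kuramotoField κ (x s) i - kuramotoField κ (x s) j))) s :=
  (((hx s hs i).fun_sub (hx s hs j)).fun_pow 2).congr_deriv (by push_cast; ring)

theorem antitoneOn_sub_sq (hx : IsKuramotoTrajectory κ x) (hκ : 0 ≤ κ) {T : ℝ}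
    (hT : ∀ t ∈ Icc 0 T, ∀ i j, |x t i - x t j| ≤ π / 2) (i j : ι) :
    AntitoneOn (fun s => (x s i - x s j) ^ 2) (Icc 0 T) := by
  refine antitoneOn_of_hasDerivWithinAt_nonpos (f' := fun s =>
      2 * ((x s i - x s j) * (kuramotoField κ (x s) i - kuramotoField κ (x s) j))) (convex_Icc 0 T)
    (fun s hs => (hx.hasDerivAt_sub_sq hs.1 i j).continuousAt.continuousWithinAt)
    (fun s hs => ?_) (fun s hs => ?_)
  all_goals rw [interior_Icc] at hs
  · exact (hx.hasDerivAt_sub_sq hs.1.le i j).hasDerivWithinAt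
  · linarith [sub_mul_kuramotoField_sub_nonpos hκ (hT s ⟨hs.1.le, hs.2.le⟩) i j]

theorem abs_sub_le (hx : IsKuramotoTrajectory κ x) (hκ : 0 ≤ κ) (hγ0 : 0 ≤ γ) (hγ : γ < π / 2)
    (h0 : ∀ i j, |x 0 i - x 0 j| ≤ γ) {t : ℝ} (ht : 0 ≤ t) (i j : ι) : |x t i - x t j| ≤ γ := by
  refine abs_le_of_sq_le_sq ?_ hγ0
  refine le_of_antitoneOn_while_le (u := fun p s => (x s p.1 - x s p.2) ^ 2)
    (b := (π / 2) ^ 2) (pow_lt_pow_left₀ hγ hγ0 two_ne_zero)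
    (fun p s hs => (hx.hasDerivAt_sub_sq hs p.1 p.2).continuousAt.continuousWithinAt)
    (fun p => sq_le_sq' (abs_le.1 (h0 p.1 p.2)).1 (abs_le.1 (h0 p.1 p.2)).2)
    (fun T hT p => hx.antitoneOn_sub_sq hκ
      (fun s hs i j => abs_le_of_sq_le_sq (hT s hs (i, j)) (by positivity)) p.1 p.2)
    ht (i, j)

theorem sum_sq_le (hx : IsKuramotoTrajectory κ x) (hκ : 0 ≤ κ) (hγ0 : 0 ≤ γ) (hγ : γ < π / 2)
    (hmean : ∑ i, x 0 i = 0) (h0 : ∀ i j, |x 0 i - x 0 j| ≤ γ) {t : ℝ} (ht : 0 ≤ t) :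
    ∑ i, x t i ^ 2 ≤ (∑ i, x 0 i ^ 2) * exp (-(2 * κ * Fintype.card ι * cos γ) * t) := by
  refine le_mul_exp_of_hasDerivAt_le_mul (f := fun s => ∑ i, x s i ^ 2)
    (f' := fun s => 2 * ∑ i, x s i * kuramotoField κ (x s) i) (fun s hs => ?_) (fun s hs => ?_) ht
  · refine (HasDerivAt.fun_sum fun i _ => (hx s hs i).pow 2).congr_deriv ?_
    rw [Finset.mul_sum]
    exact Finset.sum_congr rfl fun i _ => by push_cast; ring
  · exact two_mul_sum_mul_kuramotoField_le hκ hγ ((hx.sum_eq hs).trans hmean)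
      (fun i j => hx.abs_sub_le hκ hγ0 hγ h0 hs i j)

end IsKuramotoTrajectory

/-- Exponential synchronization for the averaged (all-to-all) homogeneous
Kuramoto system started in the phase-cohesive set Δ(γ), γ < π/2, with
mean zero. -/
theorem averaged_kuramoto_exponential_sync
    (N : ℕ) (hN : 2 ≤ N) (K : ℝ) (hK : 0 < K)
    (abar : ℝ) (habar : 0 < abar)
    (γ : ℝ) (hγ0 : 0 < γ) (hγ : γ < Real.pi / 2)
    (θ : ℝ → Fin N → ℝ)
    (hode : ∀ t : ℝ, 0 ≤ t → ∀ i : Fin N,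
      HasDerivAt (fun s => θ s i)
        ((K / N) * ∑ j : Fin N, abar * Real.sin (θ t j - θ t i)) t)
    (hmean0 : ∑ i : Fin N, θ 0 i = 0)
    (hinit : ∀ i j : Fin N, |θ 0 i - θ 0 j| ≤ γ) :
    (∀ t : ℝ, 0 ≤ t →
      ∑ i : Fin N, (θ t i) ^ 2
        ≤ (∑ i : Fin N, (θ 0 i) ^ 2)
            * Real.exp (-(2 * K * abar * Real.cos γ) * t))
    ∧ Tendsto θ atTop (nhds 0) := by
  have hN0 : (N : ℝ) ≠ 0 := by exact_mod_cast (by omega : N ≠ 0)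
  have htraj : IsKuramotoTrajectory (K / N * abar) θ := fun t ht i => by
    simpa only [kuramotoField, Finset.mul_sum, mul_assoc] using hode t ht i
  have hrate : 2 * (K / N * abar) * Fintype.card (Fin N) * cos γ = 2 * K * abar * cos γ := by
    rw [Fintype.card_fin]
    field_simp
  have hdecay := fun t (ht : 0 ≤ t) =>
    hrate ▸ htraj.sum_sq_le (by positivity) hγ0.le hγ hmean0 hinit ht
  refine ⟨hdecay, tendsto_nhds_zero_of_sum_sq_le ((eventually_ge_atTop 0).mono hdecay) ?_⟩
  have hc : 0 < 2 * K * abar * cos γ := by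
    have := cos_pos_of_mem_Ioo ⟨by linarith [pi_pos], hγ⟩
    positivity
  simpa using (tendsto_exp_atBot.comp
    ((tendsto_const_mul_atBot_of_neg (neg_neg_of_pos hc)).2 tendsto_id)).const_mul _
end
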